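/- Let s > −1 and let μ be the measure dμ(x) = x^s dx on [0,1]. Then the monic recurrence coefficients of μ are given in closed form by α_n = (1/2)(1 + s²/((s + 2n)(2 + s + 2n))) for all n ≥ 0, and √β_{n+1} = ((1+n)(1+s+n)/((s + 2 + 2n)(3 + s + 2n))) · √((3 + s + 2n)/(1 + s + 2n)) for all n ≥ 0. (These are the chain frequencies ω_n = ω_c α_n and hoppings t_n = ω_c √β_{n+1} for the spin-boson model with power-law spectral density J(ω) = 2πα ω_c^{1−s} ω^s with hard cutoff at ω_c.) -/

import Mathlib

open MeasureTheory Polynomial Filter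

noncomputable section

/-- The inner product on real polynomials induced by a measure `μ` on `ℝ`:
`⟨p, q⟩ = ∫ p(x) q(x) dμ(x)`. -/
def pinner (μ : Measure ℝ) (p q : Polynomial ℝ) : ℝ :=
  ∫ x, p.eval x * q.eval x ∂μ

/-- `μ` has finite moments of all orders: `∫ |x|^r dμ(x) < ∞` for every `r : ℕ`. -/
def HasFiniteMoments (μ : Measure ℝ) : Prop :=
  ∀ r : ℕ, Integrable (fun x => |x| ^ r) μ

/-- `μ` has infinite support: it is not concentrated on any finite set. -/
def HasInfiniteSupport (μ : Measure ℝ) : Prop :=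
  ∀ s : Set ℝ, s.Finite → μ sᶜ ≠ 0

/-- `P` is the sequence of monic orthogonal polynomials for `μ`: each `P n` is monic of
degree `n`, and distinct ones are orthogonal w.r.t. the inner product induced by `μ`. -/
def IsMonicOrthogonal (μ : Measure ℝ) (P : ℕ → Polynomial ℝ) : Prop :=
  (∀ n, (P n).Monic) ∧ (∀ n, (P n).natDegree = n) ∧
    ∀ n m, n ≠ m → pinner μ (P n) (P m) = 0

/-- The recurrence coefficient `α_k = ⟨x π_k, π_k⟩ / ⟨π_k, π_k⟩`. -/
def alphaCoeff (μ : Measure ℝ) (P : ℕ → Polynomial ℝ) (k : ℕ) : ℝ :=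
  pinner μ (X * P k) (P k) / pinner μ (P k) (P k)

/-- The recurrence coefficient `β_k = ⟨π_k, π_k⟩ / ⟨π_{k-1}, π_{k-1}⟩` (for `k ≥ 1`). -/
def betaCoeff (μ : Measure ℝ) (P : ℕ → Polynomial ℝ) (k : ℕ) : ℝ :=
  pinner μ (P k) (P k) / pinner μ (P (k - 1)) (P (k - 1))

/-- The orthonormal polynomials `p̃_n = π_n / ‖π_n‖`. -/
def ptil (μ : Measure ℝ) (P : ℕ → Polynomial ℝ) (n : ℕ) : Polynomial ℝ :=
  (Real.sqrt (pinner μ (P n) (P n)))⁻¹ • P n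

/-- `κ_n`: the leading coefficient of the orthonormal polynomial `p̃_n`. -/
def kappaC (μ : Measure ℝ) (P : ℕ → Polynomial ℝ) (n : ℕ) : ℝ :=
  (ptil μ P n).coeff n

/-- `κ'_n`: the coefficient of `x^(n-1)` in `p̃_n`, with `κ'_0 = 0`. -/
def kappaC' (μ : Measure ℝ) (P : ℕ → Polynomial ℝ) (n : ℕ) : ℝ :=
  if n = 0 then 0 else (ptil μ P n).coeff (n - 1)

/-- The measure `dμ(x) = x^s dx` on `[0, 1]` (the shifted-Jacobi weight). -/
def jacobiMeasure (s : ℝ) : Measure ℝ :=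
  (volume.restrict (Set.Icc (0 : ℝ) 1)).withDensity (fun x => ENNReal.ofReal (x ^ s))

/-!
The monic orthogonal polynomials of a measure with finite moments and infinite support are
unique, since the inner product is then definite; so it suffices to exhibit them. Take
`q_n = ∑_k (-1)^(n-k) (n choose k) (s+1+k)_n X^k`. As `∫ x^(k+m) dμ = 1/(s+k+m+1)`, the moment
`⟨q_n, X^m⟩` is the `n`-th forward difference at `0` of `t ↦ g(t) / (t + s + m + 1)` with
`g(t) = (s+1+t)_n` of degree `n`. Splitting off the pole, `Δ^n` kills the polynomial part and
`Δ^n (1/t) = (-1)^n n! / (t)_(n+1)`, so `⟨q_n, X^m⟩ = (-1)^n n! (-m)_n / (s+m+1)_(n+1)`. This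
vanishes for `m < n`, and `α_n`, `β_(n+1)` are read off from the cases `m = n, n + 1` and the
subleading coefficient of `q_n` by shifting Pochhammer symbols.
-/

open Finset fwdDiff
open scoped Nat

theorem ascPochhammer_eval_mul_add {R : Type*} [CommSemiring R] (n : ℕ) (x : R) :
    (ascPochhammer R n).eval x * (x + n) = x * (ascPochhammer R n).eval (x + 1) := by
  rw [← ascPochhammer_succ_eval, ascPochhammer_succ_left]
  simp

section FiniteDifferences

variable {R : Type*} [CommRing R]

theorem fwdDiff_iter_one_eq_sum (f : R → R) (n : ℕ) (y : R) :
    (Δ_[1])^[n] f y = ∑ k ∈ range (n + 1), (-1) ^ (n - k) * n.choose k * f (y + k) := by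
  simp [fwdDiff_iter_eq_sum_shift]

theorem fwdDiff_iter_one_congr {f g : R → R} {n : ℕ} {y : R}
    (h : ∀ k ≤ n, f (y + k) = g (y + k)) : (Δ_[1])^[n] f y = (Δ_[1])^[n] g y := by
  simp only [fwdDiff_iter_one_eq_sum]
  exact sum_congr rfl fun k hk => by rw [h k (Nat.lt_succ_iff.mp (mem_range.mp hk))]

theorem Polynomial.fwdDiff_iter_eval_eq_zero_of_degree_lt {P : R[X]} {n : ℕ}
    (hP : P.degree < n) : (Δ_[1])^[n] P.eval = 0 := by
  rcases eq_or_ne P 0 with rfl | hP0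
  · ext; simp [fwdDiff_iter_one_eq_sum]
  · exact fwdDiff_iter_eq_zero_of_degree_lt ((natDegree_lt_iff_degree_lt hP0).mpr hP)

end FiniteDifferences

section FiniteDifferencesOrderedField

variable {K : Type*} [Field K] [LinearOrder K] [IsStrictOrderedRing K]

theorem fwdDiff_iter_inv (n : ℕ) {x : K} (hx : 0 < x) :
    (Δ_[1])^[n] (fun t : K => t⁻¹) x = (-1) ^ n * n ! / (ascPochhammer K (n + 1)).eval x := by
  induction n generalizing x with
  | zero => simp
  | succ n ih =>
    rw [Function.iterate_succ_apply', fwdDiff, ih (by linarith), ih hx]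
    have hA := ascPochhammer_pos (n + 1) x hx
    have hA' := ascPochhammer_pos (n + 1) (x + 1) (by linarith)
    have hshift := ascPochhammer_eval_mul_add (n + 1) x
    rw [ascPochhammer_succ_eval (n + 1), Nat.factorial_succ]
    field_simp
    push_cast at hshift ⊢
    linear_combination (-1) ^ n * (n ! : K) * hshift

theorem fwdDiff_iter_eval_div_X_add (g : K[X]) {n : ℕ} (hg : g.natDegree ≤ n) {b : K}
    (hb : 0 < b) :
    (Δ_[1])^[n] (fun t => g.eval t / (t + b)) 0 =
      (-1) ^ n * n ! * g.eval (-b) / (ascPochhammer K (n + 1)).eval b := by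
  set h := g /ₘ (X - C (-b))
  have hdiv : ∀ t, g.eval t = g.eval (-b) + (t + b) * h.eval t := fun t => by
    conv_lhs => rw [← modByMonic_add_div g (X - C (-b)), modByMonic_X_sub_C_eq_C_eval]
    rw [eval_add, eval_C, eval_mul, eval_sub, eval_X, eval_C, sub_neg_eq_add]
  have hh : h.degree < n := by
    rcases eq_or_ne g 0 with rfl | hg0
    · simp [h]
    · exact (degree_divByMonic_lt _ _ hg0 (by rw [degree_X_sub_C]; exact zero_lt_one)).trans_le
        (degree_le_of_natDegree_le hg)
  calc (Δ_[1])^[n] (fun t => g.eval t / (t + b)) 0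
      = (Δ_[1])^[n] (h.eval + g.eval (-b) • fun t => (t + b)⁻¹) 0 := by
        refine fwdDiff_iter_one_congr fun k _ => ?_
        have : (0 : K) + k + b ≠ 0 := by positivity
        simp only [Pi.add_apply, Pi.smul_apply, smul_eq_mul]
        rw [hdiv]
        field_simp
        ring
    _ = g.eval (-b) * (Δ_[1])^[n] (fun t : K => t⁻¹) b := by
        rw [fwdDiff_iter_add, fwdDiff_iter_const_smul, Pi.add_apply,
          fwdDiff_iter_eval_eq_zero_of_degree_lt hh, Pi.smul_apply, smul_eq_mul,
          fwdDiff_iter_comp_add 1 (fun t : K => t⁻¹) b n 0, zero_add, Pi.zero_apply, zero_add]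
    _ = _ := by rw [fwdDiff_iter_inv n hb]; ring

end FiniteDifferencesOrderedField

theorem Polynomial.Monic.sub_mem_degreeLT {R : Type*} [Ring R] [Nontrivial R] {p q : R[X]}
    {n : ℕ} (hp : p.Monic) (hq : q.Monic) (hpn : p.natDegree = n) (hqn : q.natDegree = n) :
    p - q ∈ degreeLT R n := by
  rw [mem_degreeLT, ← hpn, ← degree_eq_natDegree hp.ne_zero]
  exact degree_sub_lt_left
    (by rw [degree_eq_natDegree hp.ne_zero, degree_eq_natDegree hq.ne_zero, hpn, hqn])
    hp.ne_zero (by rw [hp.leadingCoeff, hq.leadingCoeff])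

theorem Polynomial.Monic.X_mul_sub_mem_degreeLT {R : Type*} [Ring R] {Q : R[X]} {n : ℕ}
    (hQm : Q.Monic) (hQn : Q.natDegree = n) :
    X * Q - X ^ (n + 1) - Q.nextCoeff • X ^ n ∈ degreeLT R n := by
  rw [mem_degreeLT, degree_lt_iff_coeff_zero]
  intro m hm
  have hlead : Q.coeff n = 1 := hQn ▸ hQm.coeff_natDegree
  rcases m with _ | m
  · obtain rfl : n = 0 := by omega
    simp [nextCoeff, hQn]
  · simp only [coeff_sub, coeff_X_mul, coeff_X_pow, coeff_smul, smul_eq_mul]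
    rcases lt_trichotomy (m + 1) n with h | rfl | h
    · omega
    · simp [nextCoeff, hQn]
    · rcases eq_or_lt_of_le (Nat.lt_succ_iff.mp h) with rfl | h'
      · simp [hlead]
      · simp [coeff_eq_zero_of_natDegree_lt (hQn ▸ h'), h'.ne', (h'.trans m.lt_succ_self).ne']

section OrthogonalPolynomials

theorem pinner_comm (μ : Measure ℝ) (p q : ℝ[X]) : pinner μ p q = pinner μ q p := by
  simp only [pinner, mul_comm]

theorem pinner_smul_left (μ : Measure ℝ) (c : ℝ) (p q : ℝ[X]) :
    pinner μ (c • p) q = c * pinner μ p q := by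
  simp only [pinner, eval_smul, smul_eq_mul, mul_assoc, integral_const_mul]

variable {μ : Measure ℝ}

theorem HasFiniteMoments.integrable_eval (hμ : HasFiniteMoments μ) (p : ℝ[X]) :
    Integrable (fun x => p.eval x) μ := by
  simp_rw [eval_eq_sum_range]
  refine integrable_finsetSum _ fun i _ => (Integrable.const_mul ?_ _)
  exact (hμ i).mono' (by fun_prop) (ae_of_all _ fun x => by simp)

theorem pinner_add_left (hμ : HasFiniteMoments μ) (p q r : ℝ[X]) :
    pinner μ (p + q) r = pinner μ p r + pinner μ q r := by
  simp only [pinner, eval_add, add_mul]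
  exact integral_add (hμ.integrable_eval (p * r) |>.congr (ae_of_all _ fun x => eval_mul))
    (hμ.integrable_eval (q * r) |>.congr (ae_of_all _ fun x => eval_mul))

def pinnerForm (hμ : HasFiniteMoments μ) : LinearMap.BilinForm ℝ ℝ[X] :=
  LinearMap.mk₂ ℝ (pinner μ) (pinner_add_left hμ)
    (fun c p q => by rw [pinner_smul_left, smul_eq_mul])
    (fun p q r => by rw [pinner_comm, pinner_add_left hμ, pinner_comm, pinner_comm μ r])
    (fun c p q => by rw [pinner_comm, pinner_smul_left, pinner_comm, smul_eq_mul])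

@[simp]
theorem pinnerForm_apply (hμ : HasFiniteMoments μ) (p q : ℝ[X]) :
    pinnerForm hμ p q = pinner μ p q := rfl

theorem eq_zero_of_pinner_self_eq_zero (hμ : HasFiniteMoments μ) (hsupp : HasInfiniteSupport μ)
    {r : ℝ[X]} (h : pinner μ r r = 0) : r = 0 := by
  by_contra hr
  have hae : (fun x => r.eval x * r.eval x) =ᵐ[μ] 0 :=
    (integral_eq_zero_iff_of_nonneg (fun x => mul_self_nonneg _)
      (hμ.integrable_eval (r * r) |>.congr (ae_of_all _ fun x => eval_mul))).mp h
  apply hsupp {x | r.IsRoot x} (finite_setOfPred_isRoot hr)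
  rw [Filter.EventuallyEq, ae_iff] at hae
  simpa [Set.compl_def] using hae

theorem IsMonicOrthogonal.pinner_eq_zero_of_mem_degreeLT (hμ : HasFiniteMoments μ)
    {P : ℕ → ℝ[X]} (hP : IsMonicOrthogonal μ P) {n : ℕ} {r : ℝ[X]} (hr : r ∈ degreeLT ℝ n) :
    pinner μ (P n) r = 0 := by
  let S : Sequence ℝ := ⟨P, fun i => by rw [degree_eq_natDegree (hP.1 i).ne_zero, hP.2.1 i]⟩
  rw [← S.span_degreeLT fun i _ => by simp [S, (hP.1 i).leadingCoeff]] at hr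
  refine (Submodule.span_le (p := LinearMap.ker (pinnerForm hμ (P n))).mpr ?_ hr :)
  rintro _ ⟨i, hi, rfl⟩
  exact hP.2.2 n i (ne_of_gt hi)

theorem pinner_eq_zero_of_mem_degreeLT (hμ : HasFiniteMoments μ) {Q : ℝ[X]} {n : ℕ}
    (hQ : ∀ m < n, pinner μ Q (X ^ m) = 0) {r : ℝ[X]} (hr : r ∈ degreeLT ℝ n) :
    pinner μ Q r = 0 := by
  classical
  rw [degreeLT_eq_span_X_pow] at hr
  refine (Submodule.span_le (p := LinearMap.ker (pinnerForm hμ Q)).mpr ?_ hr :)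
  intro _ h
  obtain ⟨m, hm, rfl⟩ := Finset.mem_image.mp h
  exact hQ m (mem_range.mp hm)

theorem IsMonicOrthogonal.eq_of_monic (hμ : HasFiniteMoments μ) (hsupp : HasInfiniteSupport μ)
    {P : ℕ → ℝ[X]} (hP : IsMonicOrthogonal μ P) {n : ℕ} {Q : ℝ[X]} (hQm : Q.Monic)
    (hQn : Q.natDegree = n) (hQ : ∀ r ∈ degreeLT ℝ n, pinner μ Q r = 0) : P n = Q := by
  have hD := (hP.1 n).sub_mem_degreeLT hQm (hP.2.1 n) hQn
  refine sub_eq_zero.mp (eq_zero_of_pinner_self_eq_zero hμ hsupp ?_)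
  rw [← pinnerForm_apply hμ, LinearMap.map_sub₂, pinnerForm_apply, pinnerForm_apply,
    hP.pinner_eq_zero_of_mem_degreeLT hμ hD, hQ _ hD, sub_zero]

theorem pinner_self_eq_pinner_X_pow (hμ : HasFiniteMoments μ) {Q : ℝ[X]} {n : ℕ}
    (hQm : Q.Monic) (hQn : Q.natDegree = n) (hQ : ∀ r ∈ degreeLT ℝ n, pinner μ Q r = 0) :
    pinner μ Q Q = pinner μ Q (X ^ n) := by
  have h := hQ _ (hQm.sub_mem_degreeLT (monic_X_pow n) hQn (natDegree_X_pow n))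
  rwa [← pinnerForm_apply hμ, map_sub, pinnerForm_apply, pinnerForm_apply, sub_eq_zero] at h

theorem pinner_X_mul_self (hμ : HasFiniteMoments μ) {Q : ℝ[X]} {n : ℕ}
    (hQm : Q.Monic) (hQn : Q.natDegree = n) (hQ : ∀ r ∈ degreeLT ℝ n, pinner μ Q r = 0) :
    pinner μ (X * Q) Q = pinner μ Q (X ^ (n + 1)) + Q.nextCoeff * pinner μ Q (X ^ n) := by
  have h := hQ _ (hQm.X_mul_sub_mem_degreeLT hQn)
  rw [← pinnerForm_apply hμ, map_sub, map_sub, map_smul] at h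
  rw [pinner_comm]
  simp only [pinnerForm_apply, smul_eq_mul] at h
  linarith

end OrthogonalPolynomials

section JacobiMeasure

variable {s : ℝ}

theorem integral_jacobiMeasure (g : ℝ → ℝ) :
    ∫ x, g x ∂jacobiMeasure s = ∫ x in Set.Ioc 0 1, x ^ s * g x := by
  rw [jacobiMeasure, integral_withDensity_eq_integral_toReal_smul (by fun_prop)
    (ae_of_all _ fun _ => ENNReal.ofReal_lt_top), integral_Icc_eq_integral_Ioc]
  refine setIntegral_congr_fun measurableSet_Ioc fun x hx => ?_
  simp [ENNReal.toReal_ofReal (Real.rpow_nonneg hx.1.le s)]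

theorem integral_pow_jacobiMeasure (hs : -1 < s) (r : ℕ) :
    ∫ x, x ^ r ∂jacobiMeasure s = 1 / (s + r + 1) := by
  have hr : -1 < s + r := by have : (0 : ℝ) ≤ r := r.cast_nonneg; linarith
  rw [integral_jacobiMeasure, setIntegral_congr_fun measurableSet_Ioc (g := fun x => x ^ (s + r))
    fun x hx => by simp only [Real.rpow_add hx.1, Real.rpow_natCast],
    ← intervalIntegral.integral_of_le zero_le_one, integral_rpow (Or.inl hr), Real.one_rpow,
    Real.zero_rpow (by linarith)]
  ring

theorem isFiniteMeasure_jacobiMeasure (hs : -1 < s) : IsFiniteMeasure (jacobiMeasure s) :=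
  isFiniteMeasure_withDensity_ofReal
    ((intervalIntegrable_iff_integrableOn_Icc_of_le zero_le_one).mp
      (intervalIntegral.intervalIntegrable_rpow' hs)).hasFiniteIntegral

theorem ae_mem_Icc_jacobiMeasure : ∀ᵐ x ∂jacobiMeasure s, x ∈ Set.Icc (0 : ℝ) 1 :=
  (withDensity_absolutelyContinuous _ _).ae_le (ae_restrict_mem measurableSet_Icc)

theorem hasFiniteMoments_jacobiMeasure (hs : -1 < s) : HasFiniteMoments (jacobiMeasure s) := by
  have := isFiniteMeasure_jacobiMeasure hs
  intro r
  refine Integrable.of_bound (by fun_prop) 1 ?_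
  filter_upwards [ae_mem_Icc_jacobiMeasure] with x hx
  simpa [abs_of_nonneg hx.1] using pow_le_one₀ hx.1 hx.2

theorem hasInfiniteSupport_jacobiMeasure (hs : -1 < s) :
    HasInfiniteSupport (jacobiMeasure s) := by
  intro S hS hSc
  have hS0 : jacobiMeasure s S = 0 := withDensity_absolutelyContinuous _ _ <|
    nonpos_iff_eq_zero.mp ((Measure.restrict_apply_le _ _).trans_eq (hS.measure_zero volume))
  have hzero : jacobiMeasure s = 0 := by
    rw [← Measure.measure_univ_eq_zero, ← Set.union_compl_self S]
    exact measure_union_null hS0 hSc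
  have h := integral_pow_jacobiMeasure hs 0
  rw [hzero, integral_zero_measure] at h
  have : 0 < s + (0 : ℕ) + 1 := by push_cast; linarith
  exact (one_div_pos.mpr this).ne h

end JacobiMeasure

section JacobiPolynomial

variable {s : ℝ}

/-- Rodrigues' formula `(-1)^n x^(-s) (d/dx)^n (x^(n+s) (1-x)^n)` expanded; a multiple of the
shifted Jacobi polynomial `P_n^(0,s)(2x-1)`. -/
def jacobiPoly (s : ℝ) (n : ℕ) : ℝ[X] :=
  ∑ k ∈ range (n + 1), ((-1) ^ (n - k) * n.choose k * (ascPochhammer ℝ n).eval (s + 1 + k)) • X ^ k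

theorem coeff_jacobiPoly (n k : ℕ) :
    (jacobiPoly s n).coeff k =
      (-1) ^ (n - k) * n.choose k * (ascPochhammer ℝ n).eval (s + 1 + k) := by
  simp only [jacobiPoly, finsetSum_coeff, coeff_smul, coeff_X_pow, smul_eq_mul, mul_ite, mul_one,
    mul_zero, sum_ite_eq, mem_range]
  split_ifs with h
  · rfl
  · simp [Nat.choose_eq_zero_of_lt (by omega : n < k)]

theorem ascPochhammer_eval_pos_of_neg_one_lt (hs : -1 < s) (n : ℕ) :
    0 < (ascPochhammer ℝ n).eval (s + 1 + n) :=
  ascPochhammer_pos n _ (by linarith [n.cast_nonneg (α := ℝ)])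

theorem natDegree_jacobiPoly (hs : -1 < s) (n : ℕ) : (jacobiPoly s n).natDegree = n := by
  refine natDegree_eq_of_le_of_coeff_ne_zero ?_ ?_
  · exact natDegree_le_iff_coeff_eq_zero.mpr fun k hk => by
      rw [coeff_jacobiPoly, Nat.choose_eq_zero_of_lt (by exact_mod_cast hk)]; simp
  · rw [coeff_jacobiPoly]
    simpa using (ascPochhammer_eval_pos_of_neg_one_lt hs n).ne'

theorem pinner_jacobiMeasure_X_pow_X_pow (hs : -1 < s) (k m : ℕ) :
    pinner (jacobiMeasure s) (X ^ k) (X ^ m) = 1 / (s + k + m + 1) := by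
  simp only [pinner, eval_pow, eval_X, ← pow_add, integral_pow_jacobiMeasure hs]
  push_cast; ring_nf

theorem pinner_jacobiPoly_X_pow (hs : -1 < s) (n m : ℕ) :
    pinner (jacobiMeasure s) (jacobiPoly s n) (X ^ m) =
      (-1) ^ n * n ! * (ascPochhammer ℝ n).eval (-m : ℝ) /
        (ascPochhammer ℝ (n + 1)).eval (s + m + 1) := by
  set g := (ascPochhammer ℝ n).comp (X + C (s + 1))
  have hg : g.natDegree ≤ n := by
    rw [natDegree_comp, ascPochhammer_natDegree, natDegree_X_add_C, mul_one]
  have hb : 0 < s + m + 1 := by linarith [m.cast_nonneg (α := ℝ)]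
  have hgb : g.eval (-(s + m + 1)) = (ascPochhammer ℝ n).eval (-m : ℝ) := by
    simp only [g, eval_comp, eval_add, eval_X, eval_C]; ring_nf
  rw [← hgb, ← fwdDiff_iter_eval_div_X_add g hg hb, fwdDiff_iter_one_eq_sum]
  rw [← pinnerForm_apply (hasFiniteMoments_jacobiMeasure hs), jacobiPoly, map_sum,
    LinearMap.sum_apply]
  simp only [LinearMap.map_smul₂, pinnerForm_apply, pinner_jacobiMeasure_X_pow_X_pow hs,
    smul_eq_mul]
  refine sum_congr rfl fun k _ => ?_
  simp only [g, eval_comp, eval_add, eval_X, eval_C]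
  ring_nf

theorem pinner_jacobiPoly_X_pow_self (hs : -1 < s) (n : ℕ) :
    pinner (jacobiMeasure s) (jacobiPoly s n) (X ^ n) =
      (n ! : ℝ) ^ 2 / (ascPochhammer ℝ (n + 1)).eval (s + n + 1) := by
  rw [pinner_jacobiPoly_X_pow hs, ascPochhammer_eval_neg_eq_descPochhammer,
    descPochhammer_eval_eq_descFactorial, Nat.descFactorial_self, mul_mul_mul_comm, ← mul_pow,
    neg_one_mul, neg_neg, one_pow, one_mul, sq]

theorem pinner_jacobiPoly_X_pow_succ (hs : -1 < s) (n : ℕ) :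
    pinner (jacobiMeasure s) (jacobiPoly s n) (X ^ (n + 1)) =
      (n + 1) * (s + n + 1) / (s + 2 * n + 2) *
        pinner (jacobiMeasure s) (jacobiPoly s n) (X ^ n) := by
  have hx : 0 < s + n + 1 := by linarith [n.cast_nonneg (α := ℝ)]
  have hA := ascPochhammer_pos (n + 1) _ hx
  have hA' := ascPochhammer_pos (n + 1) (s + n + 1 + 1) (by linarith)
  have h1 := ascPochhammer_eval_mul_add n (-(n + 1 : ℝ))
  have h2 := ascPochhammer_eval_mul_add (n + 1) (s + n + 1)
  rw [pinner_jacobiPoly_X_pow hs, pinner_jacobiPoly_X_pow hs]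
  push_cast at h1 h2 ⊢
  rw [show -((n : ℝ) + 1) + 1 = -n by ring] at h1
  rw [show s + (n + 1 : ℝ) + 1 = s + n + 1 + 1 by ring]
  field_simp
  rw [eq_div_iff (by linarith)]
  linear_combination (ascPochhammer ℝ n).eval (-(n + 1 : ℝ)) * h2 -
    (s + n + 1) * (ascPochhammer ℝ (n + 1)).eval (s + n + 1 + 1) * h1

theorem leadingCoeff_jacobiPoly (hs : -1 < s) (n : ℕ) :
    (jacobiPoly s n).leadingCoeff = (ascPochhammer ℝ n).eval (s + 1 + n) := by
  simp [leadingCoeff, natDegree_jacobiPoly hs, coeff_jacobiPoly]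

def jacobiMonic (s : ℝ) (n : ℕ) : ℝ[X] :=
  C ((ascPochhammer ℝ n).eval (s + 1 + n))⁻¹ * jacobiPoly s n

theorem monic_jacobiMonic (hs : -1 < s) (n : ℕ) : (jacobiMonic s n).Monic :=
  monic_C_mul_of_mul_leadingCoeff_eq_one <| by
    rw [leadingCoeff_jacobiPoly hs, inv_mul_cancel₀ (ascPochhammer_eval_pos_of_neg_one_lt hs n).ne']

theorem natDegree_jacobiMonic (hs : -1 < s) (n : ℕ) : (jacobiMonic s n).natDegree = n := by
  rw [jacobiMonic, natDegree_C_mul (inv_ne_zero (ascPochhammer_eval_pos_of_neg_one_lt hs n).ne'),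
    natDegree_jacobiPoly hs]

theorem pinner_jacobiMonic_left (p : ℝ[X]) (n : ℕ) :
    pinner (jacobiMeasure s) (jacobiMonic s n) p =
      ((ascPochhammer ℝ n).eval (s + 1 + n))⁻¹ * pinner (jacobiMeasure s) (jacobiPoly s n) p := by
  rw [jacobiMonic, C_mul', pinner_smul_left]

theorem pinner_jacobiMonic_eq_zero_of_mem_degreeLT (hs : -1 < s) {n : ℕ} {r : ℝ[X]}
    (hr : r ∈ degreeLT ℝ n) : pinner (jacobiMeasure s) (jacobiMonic s n) r = 0 := by
  refine pinner_eq_zero_of_mem_degreeLT (hasFiniteMoments_jacobiMeasure hs) (fun m hm => ?_) hr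
  rw [pinner_jacobiMonic_left, pinner_jacobiPoly_X_pow hs, ascPochhammer_eval_neg_coe_nat_of_lt hm]
  simp

theorem nextCoeff_jacobiMonic (hs : -1 < s) (n : ℕ) :
    (jacobiMonic s n).nextCoeff = -n * (s + n) / (s + 2 * n) := by
  rcases Nat.eq_zero_or_pos n with rfl | hn
  · simp [nextCoeff, natDegree_jacobiMonic hs]
  rw [nextCoeff_of_natDegree_pos (by rwa [natDegree_jacobiMonic hs]), natDegree_jacobiMonic hs,
    jacobiMonic, coeff_C_mul, coeff_jacobiPoly, Nat.sub_sub_self hn, Nat.choose_symm hn,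
    Nat.choose_one_right, Nat.cast_sub hn]
  have hshift := ascPochhammer_eval_mul_add n (s + n)
  have hn' : (1 : ℝ) ≤ n := by exact_mod_cast hn
  have hA := ascPochhammer_pos n (s + n + 1) (by linarith)
  have hd : s + 2 * n ≠ 0 := by linarith
  push_cast
  rw [show s + 1 + ((n : ℝ) - 1) = s + n by ring, show s + 1 + (n : ℝ) = s + n + 1 by ring]
  rw [eq_div_iff hd]
  field_simp
  linear_combination -hshift

theorem IsMonicOrthogonal.eq_jacobiMonic (hs : -1 < s) {P : ℕ → ℝ[X]}
    (hP : IsMonicOrthogonal (jacobiMeasure s) P) (n : ℕ) : P n = jacobiMonic s n :=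
  hP.eq_of_monic (hasFiniteMoments_jacobiMeasure hs) (hasInfiniteSupport_jacobiMeasure hs)
    (monic_jacobiMonic hs n) (natDegree_jacobiMonic hs n)
    fun _ hr => pinner_jacobiMonic_eq_zero_of_mem_degreeLT hs hr

theorem pinner_jacobiMonic_self (hs : -1 < s) (n : ℕ) :
    pinner (jacobiMeasure s) (jacobiMonic s n) (jacobiMonic s n) =
      (n ! : ℝ) ^ 2 / ((ascPochhammer ℝ n).eval (s + n + 1) *
        (ascPochhammer ℝ (n + 1)).eval (s + n + 1)) := by
  rw [pinner_self_eq_pinner_X_pow (hasFiniteMoments_jacobiMeasure hs) (monic_jacobiMonic hs n)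
    (natDegree_jacobiMonic hs n) fun _ hr => pinner_jacobiMonic_eq_zero_of_mem_degreeLT hs hr,
    pinner_jacobiMonic_left, pinner_jacobiPoly_X_pow_self hs, add_right_comm]
  field_simp

theorem pinner_X_mul_jacobiMonic_div (hs : -1 < s) (n : ℕ) :
    pinner (jacobiMeasure s) (X * jacobiMonic s n) (jacobiMonic s n) /
        pinner (jacobiMeasure s) (jacobiMonic s n) (jacobiMonic s n) =
      1 / 2 * (1 + s ^ 2 / ((s + 2 * n) * (2 + s + 2 * n))) := by
  have hμ := hasFiniteMoments_jacobiMeasure hs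
  have hJ : ∀ r ∈ degreeLT ℝ n, pinner (jacobiMeasure s) (jacobiMonic s n) r = 0 :=
    fun _ hr => pinner_jacobiMonic_eq_zero_of_mem_degreeLT hs hr
  have hpos : 0 < pinner (jacobiMeasure s) (jacobiPoly s n) (X ^ n) := by
    rw [pinner_jacobiPoly_X_pow_self hs]
    exact div_pos (by positivity) (ascPochhammer_pos _ _ (by linarith [n.cast_nonneg (α := ℝ)]))
  have hA := ascPochhammer_eval_pos_of_neg_one_lt hs n
  have hd : s + 2 * n + 2 ≠ 0 := by linarith [n.cast_nonneg (α := ℝ)]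
  calc _ = (n + 1) * (s + n + 1) / (s + 2 * n + 2) - n * (s + n) / (s + 2 * n) := by
        rw [pinner_X_mul_self hμ (monic_jacobiMonic hs n) (natDegree_jacobiMonic hs n) hJ,
          pinner_self_eq_pinner_X_pow hμ (monic_jacobiMonic hs n) (natDegree_jacobiMonic hs n) hJ,
          pinner_jacobiMonic_left, pinner_jacobiMonic_left, pinner_jacobiPoly_X_pow_succ hs,
          nextCoeff_jacobiMonic hs]
        field_simp
        ring
    _ = _ := by
        rcases eq_or_ne (s + 2 * n) 0 with h0 | h0
        · obtain rfl : n = 0 := by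
            have : (n : ℝ) < 1 := by linarith
            exact Nat.lt_one_iff.mp (by exact_mod_cast this)
          obtain rfl : s = 0 := by simpa using h0
          norm_num
        · rw [div_sub_div _ _ hd h0, show 2 + s + 2 * (n : ℝ) = s + 2 * n + 2 by ring, eq_comm,
            ← sub_eq_zero]
          field_simp
          ring

theorem pinner_jacobiMonic_self_succ_div (hs : -1 < s) (n : ℕ) :
    pinner (jacobiMeasure s) (jacobiMonic s (n + 1)) (jacobiMonic s (n + 1)) /
        pinner (jacobiMeasure s) (jacobiMonic s n) (jacobiMonic s n) =
      ((1 + n) * (1 + s + n) / ((s + 2 + 2 * n) * (3 + s + 2 * n))) ^ 2 *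
        ((3 + s + 2 * n) / (1 + s + 2 * n)) := by
  rw [pinner_jacobiMonic_self hs, pinner_jacobiMonic_self hs]
  obtain ⟨x, rfl⟩ : ∃ x, s = x - n - 1 := ⟨s + n + 1, by ring⟩
  have hx : 0 < x := by linarith
  set a := (ascPochhammer ℝ n).eval x
  have ha : 0 < a := ascPochhammer_pos n x hx
  have hshift := ascPochhammer_eval_mul_add n x
  have e1 : (ascPochhammer ℝ (n + 1)).eval x = a * (x + n) := ascPochhammer_succ_eval n x
  have e2 : (ascPochhammer ℝ (n + 1)).eval (x + 1) = a * (x + n) * (x + n + 1) / x := by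
    rw [ascPochhammer_succ_eval, eq_div_iff hx.ne', hshift]; ring
  have e3 : (ascPochhammer ℝ (n + 2)).eval (x + 1) =
      a * (x + n) * (x + n + 1) * (x + n + 2) / x := by
    rw [ascPochhammer_succ_eval, e2]; push_cast; ring
  push_cast
  rw [show x - n - 1 + (n + 1) + 1 = x + 1 by ring, show x - n - 1 + n + 1 = x by ring, e1, e2, e3,
    Nat.factorial_succ,
    show (1 + n) * (1 + (x - n - 1) + n) / ((x - n - 1 + 2 + 2 * n) * (3 + (x - n - 1) + 2 * n)) =
      (n + 1) * x / ((x + n + 1) * (x + n + 2)) by ring,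
    show (3 + (x - n - 1) + 2 * n) / (1 + (x - n - 1) + 2 * n) = (x + n + 2) / (x + n) by ring]
  have : (0 : ℝ) < n ! := by positivity
  push_cast
  field_simp
  ring

end JacobiPolynomial

/-- For the measure `dμ(x) = x^s dx` on `[0,1]` (`s > -1`), the monic
recurrence coefficients are `α_n = (1/2)(1 + s²/((s + 2n)(2 + s + 2n)))` and
`√β_{n+1} = ((1+n)(1+s+n)/((s + 2 + 2n)(3 + s + 2n))) √((3 + s + 2n)/(1 + s + 2n))`.
(These give the chain frequencies `ω_n = ω_c α_n` and hoppings `t_n = ω_c √β_{n+1}` of the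
spin-boson model with power-law spectral density and hard cutoff.) -/
theorem jacobi_chain_coefficients
    (s : ℝ) (hs : -1 < s)
    (P : ℕ → Polynomial ℝ) (hP : IsMonicOrthogonal (jacobiMeasure s) P) :
    (∀ n : ℕ, alphaCoeff (jacobiMeasure s) P n =
        (1 / 2) * (1 + s ^ 2 / ((s + 2 * n) * (2 + s + 2 * n)))) ∧
      ∀ n : ℕ, Real.sqrt (betaCoeff (jacobiMeasure s) P (n + 1)) =
        ((1 + n) * (1 + s + n) / ((s + 2 + 2 * n) * (3 + s + 2 * n))) *
          Real.sqrt ((3 + s + 2 * n) / (1 + s + 2 * n)) := by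
  refine ⟨fun n => ?_, fun n => ?_⟩
  · rw [alphaCoeff, hP.eq_jacobiMonic hs, pinner_X_mul_jacobiMonic_div hs]
  · rw [betaCoeff, Nat.add_sub_cancel, hP.eq_jacobiMonic hs, hP.eq_jacobiMonic hs,
      pinner_jacobiMonic_self_succ_div hs, Real.sqrt_mul (sq_nonneg _), Real.sqrt_sq]
    have : (0 : ℝ) ≤ n := n.cast_nonneg
    exact div_nonneg (by nlinarith) (by nlinarith)
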